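/- Every balanced quadtree can be properly colored with 3 colors under edge adjacency; that is, for every balanced quadtree Q there exists a function f : Q → Fin 3 such that f(s) ≠ f(t) whenever s and t are edge-adjacent squares of Q. -/
import Mathlib


/-- A dyadic square `[i/2^k, (i+1)/2^k] × [j/2^k, (j+1)/2^k] ⊆ [0,1]²`,
recorded by its level `k` and coordinates `i, j < 2^k`. -/
structure DyadicSquare where
  k : ℕ
  i : ℕ
  j : ℕ
  hi : i < 2 ^ k
  hj : j < 2 ^ k
deriving DecidableEq

namespace DyadicSquare

/-- The subset of the plane occupied by a dyadic square. -/
def region (s : DyadicSquare) : Set (ℝ × ℝ) :=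
  Set.Icc ((s.i : ℝ) / 2 ^ s.k) (((s.i : ℝ) + 1) / 2 ^ s.k) ×ˢ
    Set.Icc ((s.j : ℝ) / 2 ^ s.k) (((s.j : ℝ) + 1) / 2 ^ s.k)

/-- Two squares are edge-adjacent if they are distinct and their intersection
contains more than one point (a segment of positive length). -/
def EdgeAdj (s t : DyadicSquare) : Prop :=
  s ≠ t ∧ (s.region ∩ t.region).Nontrivial

/-- Two squares are corner-adjacent if they are distinct and their intersection
is nonempty (they share at least a corner point or part of an edge). -/
def CornerAdj (s t : DyadicSquare) : Prop :=
  s ≠ t ∧ (s.region ∩ t.region).Nonempty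

end DyadicSquare

/-- A finite set of dyadic squares has pairwise disjoint interiors. -/
def PairwiseDisjointInteriors (Q : Finset DyadicSquare) : Prop :=
  (Q : Set DyadicSquare).Pairwise fun s t =>
    interior s.region ∩ interior t.region = ∅

/-- A quadtree: a finite set of dyadic squares with pairwise disjoint interiors
whose union is the unit square `[0,1]²`. -/
def IsQuadtree (Q : Finset DyadicSquare) : Prop :=
  PairwiseDisjointInteriors Q ∧
    (⋃ s ∈ Q, s.region) = Set.Icc (0 : ℝ) 1 ×ˢ Set.Icc (0 : ℝ) 1

/-- A quadtree is balanced if any two edge-adjacent squares have side lengths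
(`2^{-k}`) within a factor of two of each other. -/
def IsBalanced (Q : Finset DyadicSquare) : Prop :=
  ∀ s ∈ Q, ∀ t ∈ Q, DyadicSquare.EdgeAdj s t → s.k ≤ t.k + 1 ∧ t.k ≤ s.k + 1

namespace QT3Aux

/-- The coloring: `(i+j) mod 3` at even levels, `(2(i+j)+1) mod 3` at odd levels. -/
def qcol (k i j : ℕ) : ℕ :=
  if k % 2 = 0 then (i + j) % 3 else (2 * (i + j) + 1) % 3

lemma qcol_lt (k i j : ℕ) : qcol k i j < 3 := by
  unfold qcol; split <;> omega

/-- Classification of a nontrivial intersection of two closed axis-parallel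
rectangles with disjoint interiors: they abut along a vertical or a horizontal
line, and overlap nontrivially in the other coordinate. -/
lemma rect_classify (a1 a2 b1 b2 c1 c2 d1 d2 : ℝ)
    (ha : a1 < a2) (hb : b1 < b2) (hc : c1 < c2) (hd : d1 < d2)
    (hdisj : interior (Set.Icc a1 a2 ×ˢ Set.Icc b1 b2) ∩
      interior (Set.Icc c1 c2 ×ˢ Set.Icc d1 d2) = ∅)
    (hnt : ((Set.Icc a1 a2 ×ˢ Set.Icc b1 b2) ∩
      (Set.Icc c1 c2 ×ˢ Set.Icc d1 d2)).Nontrivial) :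
    (c1 ≤ a2 ∧ a1 ≤ c2 ∧ (a2 ≤ c1 ∨ c2 ≤ a1) ∧ d1 < b2 ∧ b1 < d2) ∨
    (d1 ≤ b2 ∧ b1 ≤ d2 ∧ (b2 ≤ d1 ∨ d2 ≤ b1) ∧ c1 < a2 ∧ a1 < c2) := by
  rw [interior_prod_eq, interior_prod_eq, interior_Icc, interior_Icc, interior_Icc,
    interior_Icc, Set.prod_inter_prod, Set.prod_eq_empty_iff] at hdisj
  rw [Set.prod_inter_prod] at hnt
  obtain ⟨⟨x1, y1⟩, hm1, ⟨x2, y2⟩, hm2, hne⟩ := hnt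
  simp only [Set.mem_prod, Set.mem_inter_iff, Set.mem_Icc] at hm1 hm2
  obtain ⟨⟨⟨hx1a, hx1a'⟩, hx1c, hx1c'⟩, ⟨hy1b, hy1b'⟩, hy1d, hy1d'⟩ := hm1
  obtain ⟨⟨⟨hx2a, hx2a'⟩, hx2c, hx2c'⟩, ⟨hy2b, hy2b'⟩, hy2d, hy2d'⟩ := hm2
  rcases hdisj with hx | hy
  · left
    have hxsep : a2 ≤ c1 ∨ c2 ≤ a1 := by
      by_contra hcon
      push_neg at hcon
      have hlt : max a1 c1 < min a2 c2 := by
        simp only [lt_min_iff, max_lt_iff]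
        exact ⟨⟨ha, hcon.1⟩, hcon.2, hc⟩
      have hne' : (Set.Ioo a1 a2 ∩ Set.Ioo c1 c2).Nonempty := by
        rw [Set.Ioo_inter_Ioo]
        exact Set.nonempty_Ioo.2 hlt
      rw [hx] at hne'
      exact Set.not_nonempty_empty hne'
    have hxeq : x1 = x2 := by
      rcases hxsep with h | h
      · apply le_antisymm <;> linarith
      · apply le_antisymm <;> linarith
    have hyne : y1 ≠ y2 := by
      intro h
      exact hne (by rw [Prod.ext_iff]; exact ⟨hxeq, h⟩)
    refine ⟨by linarith, by linarith, hxsep, ?_, ?_⟩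
    · rcases hyne.lt_or_gt with h | h <;> linarith
    · rcases hyne.lt_or_gt with h | h <;> linarith
  · right
    have hysep : b2 ≤ d1 ∨ d2 ≤ b1 := by
      by_contra hcon
      push_neg at hcon
      have hlt : max b1 d1 < min b2 d2 := by
        simp only [lt_min_iff, max_lt_iff]
        exact ⟨⟨hb, hcon.1⟩, hcon.2, hd⟩
      have hne' : (Set.Ioo b1 b2 ∩ Set.Ioo d1 d2).Nonempty := by
        rw [Set.Ioo_inter_Ioo]
        exact Set.nonempty_Ioo.2 hlt
      rw [hy] at hne'
      exact Set.not_nonempty_empty hne'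
    have hyeq : y1 = y2 := by
      rcases hysep with h | h
      · apply le_antisymm <;> linarith
      · apply le_antisymm <;> linarith
    have hxne : x1 ≠ x2 := by
      intro h
      exact hne (by rw [Prod.ext_iff]; exact ⟨h, hyeq⟩)
    refine ⟨by linarith, by linarith, hysep, ?_, ?_⟩
    · rcases hxne.lt_or_gt with h | h <;> linarith
    · rcases hxne.lt_or_gt with h | h <;> linarith

/-- A dyadic square's region, rescaled to the common grid of level `K`. -/
lemma region_eq (s : DyadicSquare) (K : ℕ) (h : s.k ≤ K) :
    s.region =
      Set.Icc (((s.i * 2 ^ (K - s.k) : ℕ) : ℝ) / 2 ^ K)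
        ((((s.i + 1) * 2 ^ (K - s.k) : ℕ) : ℝ) / 2 ^ K) ×ˢ
      Set.Icc (((s.j * 2 ^ (K - s.k) : ℕ) : ℝ) / 2 ^ K)
        ((((s.j + 1) * 2 ^ (K - s.k) : ℕ) : ℝ) / 2 ^ K) := by
  have h2 : (2 : ℝ) ^ K = 2 ^ s.k * 2 ^ (K - s.k) := by
    rw [← pow_add]; congr 1; omega
  have key : ∀ n : ℕ, ((n * 2 ^ (K - s.k) : ℕ) : ℝ) / 2 ^ K = (n : ℝ) / 2 ^ s.k := by
    intro n
    rw [div_eq_div_iff (by positivity) (by positivity)]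
    push_cast
    rw [h2]; ring
  unfold DyadicSquare.region
  rw [key s.i, key (s.i + 1), key s.j, key (s.j + 1)]
  push_cast
  rfl

/-- Arithmetic classification of edge adjacency at a common level `K`. -/
lemma classify (s t : DyadicSquare) (K : ℕ) (hsK : s.k ≤ K) (htK : t.k ≤ K)
    (hdisj : interior s.region ∩ interior t.region = ∅)
    (hnt : (s.region ∩ t.region).Nontrivial) :
    (t.i * 2 ^ (K - t.k) ≤ (s.i + 1) * 2 ^ (K - s.k) ∧
     s.i * 2 ^ (K - s.k) ≤ (t.i + 1) * 2 ^ (K - t.k) ∧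
     ((s.i + 1) * 2 ^ (K - s.k) ≤ t.i * 2 ^ (K - t.k) ∨
      (t.i + 1) * 2 ^ (K - t.k) ≤ s.i * 2 ^ (K - s.k)) ∧
     t.j * 2 ^ (K - t.k) < (s.j + 1) * 2 ^ (K - s.k) ∧
     s.j * 2 ^ (K - s.k) < (t.j + 1) * 2 ^ (K - t.k)) ∨
    (t.j * 2 ^ (K - t.k) ≤ (s.j + 1) * 2 ^ (K - s.k) ∧
     s.j * 2 ^ (K - s.k) ≤ (t.j + 1) * 2 ^ (K - t.k) ∧
     ((s.j + 1) * 2 ^ (K - s.k) ≤ t.j * 2 ^ (K - t.k) ∨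
      (t.j + 1) * 2 ^ (K - t.k) ≤ s.j * 2 ^ (K - s.k)) ∧
     t.i * 2 ^ (K - t.k) < (s.i + 1) * 2 ^ (K - s.k) ∧
     s.i * 2 ^ (K - s.k) < (t.i + 1) * 2 ^ (K - t.k)) := by
  have hpow : (0 : ℝ) < 2 ^ K := by positivity
  have hle : ∀ m n : ℕ, ((m : ℕ) : ℝ) / 2 ^ K ≤ ((n : ℕ) : ℝ) / 2 ^ K ↔ m ≤ n := by
    intro m n
    rw [div_le_div_iff_of_pos_right hpow]
    exact_mod_cast Iff.rfl
  have hlt : ∀ m n : ℕ, ((m : ℕ) : ℝ) / 2 ^ K < ((n : ℕ) : ℝ) / 2 ^ K ↔ m < n := by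
    intro m n
    rw [div_lt_div_iff_of_pos_right hpow]
    exact_mod_cast Iff.rfl
  have hmono : ∀ m n : ℕ, m < n → ((m : ℕ) : ℝ) / 2 ^ K < ((n : ℕ) : ℝ) / 2 ^ K :=
    fun m n h => (hlt m n).2 h
  have hps : 0 < 2 ^ (K - s.k) := pow_pos (by norm_num) _
  have hpt : 0 < 2 ^ (K - t.k) := pow_pos (by norm_num) _
  rw [region_eq s K hsK, region_eq t K htK] at hdisj hnt
  have h := rect_classify _ _ _ _ _ _ _ _
    (hmono _ _ (by exact Nat.mul_lt_mul_of_lt_of_le (Nat.lt_succ_self _) le_rfl hps))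
    (hmono _ _ (by exact Nat.mul_lt_mul_of_lt_of_le (Nat.lt_succ_self _) le_rfl hps))
    (hmono _ _ (by exact Nat.mul_lt_mul_of_lt_of_le (Nat.lt_succ_self _) le_rfl hpt))
    (hmono _ _ (by exact Nat.mul_lt_mul_of_lt_of_le (Nat.lt_succ_self _) le_rfl hpt))
    hdisj hnt
  simp only [hle, hlt] at h
  exact h

end QT3Aux

open QT3Aux in
/-- Every balanced quadtree can be properly 3-colored under edge adjacency. -/
theorem balanced_quadtree_three_colorable (Q : Finset DyadicSquare)
    (hQ : IsQuadtree Q) (hbal : IsBalanced Q) :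
    ∃ f : DyadicSquare → Fin 3,
      ∀ s ∈ Q, ∀ t ∈ Q, DyadicSquare.EdgeAdj s t → f s ≠ f t := by
  refine ⟨fun s => ⟨qcol s.k s.i s.j, qcol_lt _ _ _⟩, ?_⟩
  intro s hs t ht hadj
  obtain ⟨hne, hnt⟩ := hadj
  have hdisj := hQ.1 (Finset.mem_coe.2 hs) (Finset.mem_coe.2 ht) hne
  have hk := hbal s hs t ht ⟨hne, hnt⟩
  have h := classify s t (max s.k t.k) (le_max_left _ _) (le_max_right _ _) hdisj hnt
  simp only [Ne, Fin.mk.injEq]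
  intro hcol
  have hcase : t.k = s.k ∨ t.k = s.k + 1 ∨ s.k = t.k + 1 := by omega
  rcases hcase with h1 | h1 | h1
  · have hKeq : max s.k t.k = s.k := by rw [h1, max_self]
    have e1 : max s.k t.k - s.k = 0 := by omega
    have e2 : max s.k t.k - t.k = 0 := by omega
    rw [e1, e2] at h
    norm_num at h
    unfold qcol at hcol
    split_ifs at hcol <;> omega
  · have hKeq : max s.k t.k = s.k + 1 := by
      rw [h1]; exact max_eq_right (by omega)
    have e1 : max s.k t.k - s.k = 1 := by omega
    have e2 : max s.k t.k - t.k = 0 := by omega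
    rw [e1, e2] at h
    norm_num at h
    unfold qcol at hcol
    split_ifs at hcol <;> omega
  · have hKeq : max s.k t.k = t.k + 1 := by
      rw [h1]; exact max_eq_left (by omega)
    have e1 : max s.k t.k - s.k = 0 := by omega
    have e2 : max s.k t.k - t.k = 1 := by omega
    rw [e1, e2] at h
    norm_num at h
    unfold qcol at hcol
    split_ifs at hcol <;> omega
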